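/- Let σ be a strongly convex rational polyhedral cone in N_ℝ (N a lattice of rank n) whose rays span N_ℝ. Suppose there exists a direct sum decomposition N_ℂ = ⊕_{m∈M} E^σ_m into subspaces indexed by the dual lattice, such that for every ray ρ of σ with primitive generator u_ρ and every i ∈ {0, 1, 2}: ⊕_{⟨m,u_ρ⟩ ≥ 2} E^σ_m = 0, ⊕_{⟨m,u_ρ⟩ ≥ 1} E^σ_m = ℂ·u_ρ, and ⊕_{⟨m,u_ρ⟩ ≥ 0} E^σ_m = N_ℂ. Then the primitive ray generators {u_ρ} form a ℤ-basis of N; in particular σ is a smooth cone. -/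

import Mathlib

/-!
Klyachko's conditions force every nonzero summand `E_m` to have weight `⟨m, u_ρ⟩ ∈ {0, 1}` on
every ray generator, and to lie on the line `ℂ·u_ρ` when the weight is `1`. Such a summand cannot
lie on the lines of two different rays, since two primitive generators spanning the same line are
equal or opposite, and opposite generators contradict strong convexity. Choosing for each ray a
nonzero summand of weight `1` on it therefore gives functionals `m_ρ ∈ M` with
`⟨m_ρ, u_ρ'⟩ = δ_ρρ'`. As the rays span `N_ℝ` there are at least `n` of them, and a nonzero lattice
vector killed by every `m_ρ` would extend the `u_ρ` to `n + 1` independent vectors of `N ≅ ℤⁿ`;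
so the `u_ρ` and `m_ρ` are dual bases.
-/

/-- The realification map `N = ℤⁿ → N_ℝ = ℝⁿ`. -/
def toR {n : ℕ} (u : Fin n → ℤ) : Fin n → ℝ := fun i => (u i : ℝ)

/-- The complexification map `N = ℤⁿ → N_ℂ = ℂⁿ`. -/
def toC {n : ℕ} (u : Fin n → ℤ) : Fin n → ℂ := fun i => (u i : ℂ)

/-- A lattice vector is primitive if it is nonzero and not a non-unit integer
multiple of another lattice vector. -/
def Primitive {n : ℕ} (u : Fin n → ℤ) : Prop :=
  u ≠ 0 ∧ ∀ (k : ℤ) (v : Fin n → ℤ), u = k • v → IsUnit k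

/-- The rational polyhedral cone in `N_ℝ = ℝⁿ` generated by a finite set of
lattice vectors. -/
def coneOf {n : ℕ} (gens : Finset (Fin n → ℤ)) : Set (Fin n → ℝ) :=
  {x | ∃ c : (Fin n → ℤ) → ℝ, (∀ v, 0 ≤ c v) ∧ x = ∑ v ∈ gens, c v • toR v}

open Module

theorem iSupIndep.of_iSup₂_eq_top {α ι : Type*} [CompleteLattice α] {E : ι → α}
    (hE : iSupIndep E) {p : ι → Prop} (htop : ⨆ i, ⨆ _ : p i, E i = ⊤) {i : ι} (hi : E i ≠ ⊥) :
    p i := by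
  by_contra hpi
  have hle : ⨆ j, ⨆ _ : p j, E j ≤ ⨆ j, ⨆ _ : j ≠ i, E j :=
    iSup₂_le fun j hj => le_iSup₂_of_le j (ne_of_apply_ne p fun h => hpi (h ▸ hj)) le_rfl
  exact hi (disjoint_top.mp (htop ▸ (hE i).mono_right hle))

theorem Module.DualBases.of_card_le_finrank {R M ι : Type*} [CommRing R] [IsDomain R]
    [AddCommGroup M] [Module R M] [Module.Finite R M] [IsTorsionFree R M] [Fintype ι]
    {e : ι → M} {ε : ι → Dual R M} (eval_same : ∀ i, ε i (e i) = 1)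
    (eval_of_ne : Pairwise fun i j ↦ ε i (e j) = 0) (hcard : finrank R M ≤ Fintype.card ι) :
    DualBases e ε := by
  have ε_sum (g : ι → R) (i : ι) : ε i (∑ j, g j • e j) = g i := by
    rw [map_sum, Finset.sum_eq_single i
      (fun j _ hji => by rw [map_smul, eval_of_ne hji.symm, smul_zero]) (by simp),
      map_smul, eval_same, smul_eq_mul, mul_one]
  have eq_zero_of_forall_eval_eq_zero {y : M} (hy : ∀ i, ε i y = 0) : y = 0 := by
    by_contra hy0
    have hli : LinearIndependent R (fun o : Option ι => o.elim y e) := by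
      rw [Fintype.linearIndependent_iff]
      intro g hg
      simp only [Fintype.sum_option, Option.elim_none, Option.elim_some] at hg
      have hsome (i : ι) : g (some i) = 0 := by
        simpa [hy, ε_sum (fun j => g (some j)) i] using congrArg (ε i) hg
      have hnone : g none = 0 := by
        simp only [hsome, zero_smul, Finset.sum_const_zero, add_zero] at hg
        exact (smul_eq_zero.mp hg).resolve_right hy0
      intro o; cases o <;> simp [hsome, hnone]
    have := hli.fintype_card_le_finrank
    simp only [Fintype.card_option] at this
    omega
  refine { eval_same, eval_of_ne, total := fun h => sub_eq_zero.mp ?_ }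
  exact eq_zero_of_forall_eval_eq_zero fun i => by rw [map_sub, h, sub_self]

namespace Primitive

variable {n : ℕ} {u v : Fin n → ℤ}

theorem eq_or_eq_neg_of_smul_eq_smul (hu : Primitive u) (hv : Primitive v) {p q : ℤ}
    (hq : q ≠ 0) (h : q • u = p • v) : u = v ∨ u = -v := by
  obtain ⟨g, p₀, q₀, hg, hcop, rfl, rfl⟩ := Int.exists_gcd_one' (Int.gcd_pos_of_ne_zero_right p hq)
  have h₀ : q₀ • u = p₀ • v := by
    refine smul_right_injective _ (Int.natCast_ne_zero.mpr hg.ne') ?_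
    simpa only [smul_smul, mul_comm (g : ℤ)] using h
  obtain ⟨a, b, hab⟩ := Int.isCoprime_iff_gcd_eq_one.mpr hcop
  set w := a • u + b • v
  have hu_eq : u = p₀ • w := by
    calc u = (a * p₀ + b * q₀) • u := by rw [hab, one_smul]
      _ = a • p₀ • u + b • q₀ • u := by module
      _ = p₀ • w := by rw [h₀]; module
  have hv_eq : v = q₀ • w := by
    calc v = (a * p₀ + b * q₀) • v := by rw [hab, one_smul]
      _ = a • p₀ • v + b • q₀ • v := by module
      _ = q₀ • w := by rw [← h₀]; module
  rcases Int.isUnit_iff.mp (hu.2 p₀ w hu_eq) with rfl | rfl <;>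
    rcases Int.isUnit_iff.mp (hv.2 q₀ w hv_eq) with rfl | rfl <;>
    simp_all

end Primitive

section Cone

variable {n : ℕ} {gens : Finset (Fin n → ℤ)} {u v : Fin n → ℤ}

theorem toR_mem_coneOf (hu : u ∈ gens) : toR u ∈ coneOf gens :=
  ⟨Pi.single u 1, fun w => by by_cases h : w = u <;> simp [h],
    by simp [Pi.single_apply, hu]⟩

theorem ne_neg_of_mem_of_strongly_convex (hconv : ∀ x ∈ coneOf gens, -x ∈ coneOf gens → x = 0)
    (hu : u ∈ gens) (hv : v ∈ gens) (hu0 : u ≠ 0) : u ≠ -v := by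
  rintro rfl
  have hneg : -toR (-v) ∈ coneOf gens := by
    convert toR_mem_coneOf hv using 1
    ext i; simp [toR]
  refine hu0 (funext fun i => ?_)
  simpa [toR] using congrFun (hconv _ (toR_mem_coneOf hu) hneg) i

theorem exists_int_smul_eq_smul_of_smul_toC_eq (hu : u ≠ 0) {a b : ℂ} (ha : a ≠ 0)
    (h : a • toC u = b • toC v) : ∃ p q : ℤ, q ≠ 0 ∧ q • u = p • v := by
  obtain ⟨k, hk⟩ := Function.ne_iff.mp hu
  have hcoord (j : Fin n) : a * u j = b * v j := by simpa [toC] using congrFun h j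
  have hvk : v k ≠ 0 := by
    intro hvk
    have := hcoord k
    rw [hvk, Int.cast_zero, mul_zero, mul_eq_zero] at this
    exact hk (by exact_mod_cast this.resolve_left ha)
  refine ⟨u k, v k, hvk, funext fun j => ?_⟩
  have : a * (v k * u j) = a * (u k * v j) := by
    linear_combination (v k : ℂ) * hcoord j - (v j : ℂ) * hcoord k
  simp only [Pi.smul_apply, smul_eq_mul]
  exact_mod_cast mul_left_cancel₀ ha this

theorem eq_of_smul_toC_eq_smul_toC (hprim : ∀ u ∈ gens, Primitive u)
    (hconv : ∀ x ∈ coneOf gens, -x ∈ coneOf gens → x = 0) (hu : u ∈ gens) (hv : v ∈ gens)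
    {a b : ℂ} (ha : a ≠ 0) (h : a • toC u = b • toC v) : u = v := by
  obtain ⟨p, q, hq, hpq⟩ := exists_int_smul_eq_smul_of_smul_toC_eq (hprim u hu).1 ha h
  exact ((hprim u hu).eq_or_eq_neg_of_smul_eq_smul (hprim v hv) hq hpq).resolve_right
    (ne_neg_of_mem_of_strongly_convex hconv hu hv (hprim u hu).1)

theorem eq_of_le_span_toC (hprim : ∀ u ∈ gens, Primitive u)
    (hconv : ∀ x ∈ coneOf gens, -x ∈ coneOf gens → x = 0) (hu : u ∈ gens) (hv : v ∈ gens)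
    {F : Submodule ℂ (Fin n → ℂ)} (hF : F ≠ ⊥) (hFu : F ≤ Submodule.span ℂ {toC u})
    (hFv : F ≤ Submodule.span ℂ {toC v}) : u = v := by
  obtain ⟨x, hxF, hx0⟩ := (Submodule.ne_bot_iff F).mp hF
  obtain ⟨a, rfl⟩ := Submodule.mem_span_singleton.mp (hFu hxF)
  obtain ⟨b, hb⟩ := Submodule.mem_span_singleton.mp (hFv hxF)
  exact eq_of_smul_toC_eq_smul_toC hprim hconv hu hv (left_ne_zero_of_smul hx0) hb.symm

theorem le_card_of_span_toR_eq_top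
    (hspan : Submodule.span ℝ (toR '' (gens : Set (Fin n → ℤ))) = ⊤) : n ≤ gens.card := by
  have := finrank_span_finset_le_card (R := ℝ) (gens.image toR)
  rw [Finset.coe_image, Set.finrank, hspan, finrank_top, finrank_fin_fun] at this
  exact this.trans Finset.card_image_le

end Cone

theorem exists_dual_of_klyachko {n : ℕ} {gens : Finset (Fin n → ℤ)}
    (hprim : ∀ u ∈ gens, Primitive u) (hconv : ∀ x ∈ coneOf gens, -x ∈ coneOf gens → x = 0)
    {ι : Type*} (wt : ι → Dual ℤ (Fin n → ℤ)) {E : ι → Submodule ℂ (Fin n → ℂ)}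
    (hE : iSupIndep E)
    (h2 : ∀ u ∈ gens, (⨆ i, ⨆ _ : 2 ≤ wt i u, E i) = ⊥)
    (h1 : ∀ u ∈ gens, (⨆ i, ⨆ _ : 1 ≤ wt i u, E i) = Submodule.span ℂ {toC u})
    (h0 : ∀ u ∈ gens, (⨆ i, ⨆ _ : 0 ≤ wt i u, E i) = ⊤) {u : Fin n → ℤ} (hu : u ∈ gens) :
    ∃ m : Dual ℤ (Fin n → ℤ), m u = 1 ∧ ∀ v ∈ gens, v ≠ u → m v = 0 := by
  have hline : Submodule.span ℂ {toC u} ≠ ⊥ := by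
    rw [Ne, Submodule.span_singleton_eq_bot]
    exact fun h => (hprim u hu).1 (funext fun j => by simpa [toC] using congrFun h j)
  obtain ⟨i, hi1, hEi⟩ : ∃ i, 1 ≤ wt i u ∧ E i ≠ ⊥ := by
    by_contra! hnone
    exact hline (by simpa [← h1 u hu, iSup_eq_bot] using hnone)
  have hE_le (v : Fin n → ℤ) (hv : v ∈ gens) (hv1 : 1 ≤ wt i v) :
      E i ≤ Submodule.span ℂ {toC v} :=
    h1 v hv ▸ le_iSup₂_of_le i hv1 le_rfl
  refine ⟨wt i, le_antisymm ?_ hi1, fun v hv hvu => ?_⟩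
  · by_contra! hgt
    exact hEi (le_bot_iff.mp (h2 u hu ▸ le_iSup₂_of_le i (by omega) le_rfl))
  · rcases (hE.of_iSup₂_eq_top (h0 v hv) hEi).eq_or_lt with hzero | hpos
    · exact hzero.symm
    · exact absurd (eq_of_le_span_toC hprim hconv hv hu hEi (hE_le v hv hpos) (hE_le u hu hi1)) hvu

theorem klyachko_tangent_locally_free_implies_smooth_general (n : ℕ)
    (gens : Finset (Fin n → ℤ))
    (hprim : ∀ u ∈ gens, Primitive u)
    (hconv : ∀ x ∈ coneOf gens, -x ∈ coneOf gens → x = 0)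
    (hspan : Submodule.span ℝ (toR '' (gens : Set (Fin n → ℤ))) = ⊤)
    (ι : Type) [DecidableEq ι]
    (wt : ι → Module.Dual ℤ (Fin n → ℤ))
    (E : ι → Submodule ℂ (Fin n → ℂ)) (hds : DirectSum.IsInternal E)
    (h2 : ∀ u ∈ gens, (⨆ i, ⨆ _ : 2 ≤ wt i u, E i) = (⊥ : Submodule ℂ (Fin n → ℂ)))
    (h1 : ∀ u ∈ gens, (⨆ i, ⨆ _ : 1 ≤ wt i u, E i) = Submodule.span ℂ {toC u})
    (h0 : ∀ u ∈ gens, (⨆ i, ⨆ _ : 0 ≤ wt i u, E i) = (⊤ : Submodule ℂ (Fin n → ℂ))) :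
    ∃ b : Module.Basis {u // u ∈ gens} ℤ (Fin n → ℤ), ∀ u : {u // u ∈ gens}, b u = (u : Fin n → ℤ) := by
  choose m hm_self hm_other using fun u : {u // u ∈ gens} =>
    exists_dual_of_klyachko hprim hconv wt hds.submodule_iSupIndep h2 h1 h0 u.2
  have hdual : DualBases (fun u : {u // u ∈ gens} => (u : Fin n → ℤ)) m :=
    .of_card_le_finrank hm_self
      (fun u v huv => hm_other u v v.2 (Subtype.coe_ne_coe.mpr huv.symm))
      (by simpa using le_card_of_span_toR_eq_top hspan)
  exact ⟨hdual.basis, fun u => congrFun hdual.coe_basis u⟩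

/-- Main combinatorial theorem: let `σ` be a strongly convex rational
polyhedral cone in `N_ℝ` whose rays span `N_ℝ`, with set `gens` of primitive
ray generators.  Suppose there is a direct sum decomposition
`N_ℂ = ⊕_{m ∈ S} E_m` indexed by dual lattice elements (a finite index type
`ι` injecting via `wt` into `M = Hom(N, ℤ)`) such that for every ray generator
`u_ρ ∈ gens`: `⊕_{⟨m,u_ρ⟩ ≥ 2} E_m = 0`, `⊕_{⟨m,u_ρ⟩ ≥ 1} E_m = ℂ·u_ρ` and
`⊕_{⟨m,u_ρ⟩ ≥ 0} E_m = N_ℂ` (Klyachko's local freeness condition for the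
tangent sheaf).  Then the primitive ray generators form a `ℤ`-basis of `N`,
i.e. `σ` is a smooth cone. -/
theorem klyachko_tangent_locally_free_implies_smooth (n : ℕ)
    (gens : Finset (Fin n → ℤ))
    (hprim : ∀ u ∈ gens, Primitive u)
    (hconv : ∀ x ∈ coneOf gens, -x ∈ coneOf gens → x = 0)
    (hspan : Submodule.span ℝ (toR '' (gens : Set (Fin n → ℤ))) = ⊤)
    (ι : Type) [Fintype ι] [DecidableEq ι]
    (wt : ι → Module.Dual ℤ (Fin n → ℤ)) (hwt : Function.Injective wt)
    (E : ι → Submodule ℂ (Fin n → ℂ)) (hds : DirectSum.IsInternal E)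
    (h2 : ∀ u ∈ gens, (⨆ i, ⨆ _ : 2 ≤ wt i u, E i) = (⊥ : Submodule ℂ (Fin n → ℂ)))
    (h1 : ∀ u ∈ gens, (⨆ i, ⨆ _ : 1 ≤ wt i u, E i) = Submodule.span ℂ {toC u})
    (h0 : ∀ u ∈ gens, (⨆ i, ⨆ _ : 0 ≤ wt i u, E i) = (⊤ : Submodule ℂ (Fin n → ℂ))) :
    ∃ b : Module.Basis {u // u ∈ gens} ℤ (Fin n → ℤ), ∀ u : {u // u ∈ gens}, b u = (u : Fin n → ℤ) :=
  klyachko_tangent_locally_free_implies_smooth_general n gens hprim hconv hspan ι wt E hds h2 h1 h0
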